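/- There exists a universal constant C > 0 such that for every h ∈ [0, 1), writing α = arccos h ∈ (0, π/2], one has ℰ_h(1 − α/π) ≤ C. -/

import Mathlib

open Real MeasureTheory Filter Topology
open scoped ENNReal NNReal

noncomputable section

/-- `k = min {h, 1}`. -/
def kparam (h : ℝ) : ℝ := min h 1

/-- `α = arccos k ∈ [0, π/2]`. -/
def alphaParam (h : ℝ) : ℝ := Real.arccos (kparam h)

/-- The anisotropy potential `W_h(θ) = (1/2)(cos²θ − 2h cos θ + 2hk − k²)`. -/
def Wpot (h θ : ℝ) : ℝ :=
  (1/2) * ((Real.cos θ)^2 - 2*h*Real.cos θ + 2*h*(kparam h) - (kparam h)^2)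

/-- The set `2πℤ + {−α, α}` of allowed limits at `±∞`. -/
def limSet (h : ℝ) : Set ℝ :=
  {y | ∃ n : ℤ, y = 2*Real.pi*n + alphaParam h ∨ y = 2*Real.pi*n - alphaParam h}

/-- The total energy `E_h(φ)`, valued in `[0, ∞]`:
exchange + anisotropy energy plus the stray-field (homogeneous `H^{1/2}`) energy. -/
def energy (h : ℝ) (φ : ℝ → ℝ) : ℝ≥0∞ :=
  ENNReal.ofReal (1/2) *
      (∫⁻ x : ℝ, ENNReal.ofReal ((deriv φ x)^2 + 2 * Wpot h (φ x))) +
    ENNReal.ofReal (1/(4*Real.pi)) *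
      (∫⁻ s : ℝ, ∫⁻ t : ℝ,
        ENNReal.ofReal ((Real.cos (φ s) - Real.cos (φ t))^2 / (s - t)^2))

/-- An admissible phase: `C¹`, limits at `±∞` in `2πℤ + {−α, α}`, finite energy. -/
def Admissible (h : ℝ) (φ : ℝ → ℝ) : Prop :=
  ContDiff ℝ 1 φ ∧
    (∃ L ∈ limSet h, Tendsto φ atTop (𝓝 L)) ∧
    (∃ L ∈ limSet h, Tendsto φ atBot (𝓝 L)) ∧
    energy h φ < ⊤

/-- The winding number `deg(φ) = (φ(+∞) − φ(−∞))/(2π)`. -/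
def deg (φ : ℝ → ℝ) : ℝ :=
  (limUnder atTop φ - limUnder atBot φ) / (2*Real.pi)

/-- `𝒜_h(d)`: admissible phases of winding number `d`. -/
def AA (h d : ℝ) : Set (ℝ → ℝ) := {φ | Admissible h φ ∧ deg φ = d}

/-- `ℰ_h(d) = inf {E_h(φ) : φ ∈ 𝒜_h(d)}`. -/
def Einf (h d : ℝ) : ℝ≥0∞ := ⨅ φ ∈ AA h d, energy h φ

/-- `D_α = {n + j·α/π : n ∈ ℤ, j ∈ {−1, 0, 1}}`. -/
def Dset (h : ℝ) : Set ℝ :=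
  {d | ∃ n j : ℤ, (j = -1 ∨ j = 0 ∨ j = 1) ∧ d = n + j * alphaParam h / Real.pi}

/-!
The phase rotating smoothly from `α` to `2π - α` across `[0, 1]` and constant elsewhere has
degree `1 - α/π`, and its energy is bounded independently of `h`. Its exchange and anisotropy
densities vanish off `[0, 1]` and are bounded on it. Since `cos φ` is Lipschitz, bounded and
constant off `[0, 1]`, the stray-field kernel `(cos φ(s) - cos φ(t))² / (s - t)²` is dominated
by `(1_{[0,1]}(s) + 1_{[0,1]}(t)) · c / (1 + (s - t)²)`, whose double integral is `2cπ`.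
-/

open Set

namespace Real.smoothTransition

lemma deriv_eq_zero_of_notMem_Icc {x : ℝ} (hx : x ∉ Icc (0 : ℝ) 1) :
    deriv smoothTransition x = 0 := by
  rw [mem_Icc, not_and_or, not_le, not_le] at hx
  rcases hx with hx | hx
  · have : smoothTransition =ᶠ[𝓝 x] fun _ => 0 :=
      eventually_of_mem (Iio_mem_nhds hx) fun _ hy => zero_of_nonpos (le_of_lt hy)
    simp [this.deriv_eq]
  · have : smoothTransition =ᶠ[𝓝 x] fun _ => 1 :=
      eventually_of_mem (Ioi_mem_nhds hx) fun _ hy => one_of_one_le (le_of_lt hy)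
    simp [this.deriv_eq]

lemma exists_abs_deriv_le : ∃ M, ∀ x, |deriv smoothTransition x| ≤ M :=
  ((smoothTransition.contDiff (n := 1)).continuous_deriv le_rfl).bounded_above_of_compact_support
    (HasCompactSupport.intro isCompact_Icc fun _ hx => deriv_eq_zero_of_notMem_Icc hx)

end Real.smoothTransition

def transitionPhase (a b x : ℝ) : ℝ := a + (b - a) * smoothTransition x

section transitionPhase

variable (a b : ℝ)

lemma contDiff_transitionPhase {n : ℕ∞} : ContDiff ℝ n (transitionPhase a b) :=
  contDiff_const.add (contDiff_const.mul smoothTransition.contDiff)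

lemma deriv_transitionPhase (x : ℝ) :
    deriv (transitionPhase a b) x = (b - a) * deriv smoothTransition x := by
  have hdiff : DifferentiableAt ℝ smoothTransition x :=
    (smoothTransition.contDiff (n := 1)).differentiable one_ne_zero x
  exact ((hdiff.hasDerivAt.const_mul (b - a)).const_add a).deriv

lemma transitionPhase_of_nonpos {x : ℝ} (hx : x ≤ 0) : transitionPhase a b x = a := by
  simp [transitionPhase, smoothTransition.zero_of_nonpos hx]

lemma transitionPhase_of_one_le {x : ℝ} (hx : 1 ≤ x) : transitionPhase a b x = b := by
  simp [transitionPhase, smoothTransition.one_of_one_le hx]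

lemma tendsto_transitionPhase_atBot : Tendsto (transitionPhase a b) atBot (𝓝 a) :=
  tendsto_const_nhds.congr' <|
    (eventually_le_atBot 0).mono fun _ hx => (transitionPhase_of_nonpos a b hx).symm

lemma tendsto_transitionPhase_atTop : Tendsto (transitionPhase a b) atTop (𝓝 b) :=
  tendsto_const_nhds.congr' <|
    (eventually_ge_atTop 1).mono fun _ hx => (transitionPhase_of_one_le a b hx).symm

lemma deg_transitionPhase : deg (transitionPhase a b) = (b - a) / (2 * π) := by
  rw [deg, (tendsto_transitionPhase_atTop a b).limUnder_eq,
    (tendsto_transitionPhase_atBot a b).limUnder_eq]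

end transitionPhase

lemma lintegral_ofReal_le_mul_measure {X : Type*} [MeasurableSpace X] {μ : Measure X}
    {f : X → ℝ} {S : Set X} (hS : MeasurableSet S) {M : ℝ} (hM : ∀ x ∈ S, f x ≤ M)
    (hout : ∀ x ∉ S, f x ≤ 0) :
    ∫⁻ x, ENNReal.ofReal (f x) ∂μ ≤ ENNReal.ofReal M * μ S :=
  calc ∫⁻ x, ENNReal.ofReal (f x) ∂μ
      ≤ ∫⁻ x, S.indicator (fun _ => ENNReal.ofReal M) x ∂μ := by
        refine lintegral_mono fun x => ?_
        by_cases hx : x ∈ S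
        · simpa [hx] using ENNReal.ofReal_le_ofReal (hM x hx)
        · simp [hx, ENNReal.ofReal_eq_zero.2 (hout x hx)]
    _ = ENNReal.ofReal M * μ S := lintegral_indicator_const hS _

lemma sq_div_sq_le_of_abs_le {d u L B : ℝ} (hL : |d| ≤ L * |u|) (hB : |d| ≤ B) :
    d ^ 2 / u ^ 2 ≤ (L ^ 2 + B ^ 2) / (1 + u ^ 2) := by
  rcases eq_or_ne u 0 with rfl | hu
  · rw [zero_pow two_ne_zero, div_zero]
    positivity
  have hdL : d ^ 2 ≤ L ^ 2 * u ^ 2 := by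
    simpa [mul_pow, sq_abs] using pow_le_pow_left₀ (abs_nonneg d) hL 2
  have hdB : d ^ 2 ≤ B ^ 2 := by
    simpa [sq_abs] using pow_le_pow_left₀ (abs_nonneg d) hB 2
  rw [div_le_div_iff₀ (by positivity) (by positivity)]
  nlinarith [sq_nonneg u]

lemma lintegral_ofReal_div_one_add_sq {c : ℝ} (hc : 0 ≤ c) :
    ∫⁻ u : ℝ, ENNReal.ofReal (c / (1 + u ^ 2)) = ENNReal.ofReal (c * π) := by
  simp_rw [div_eq_mul_inv]
  rw [← ofReal_integral_eq_lintegral_ofReal (integrable_inv_one_add_sq.const_mul c)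
      (Eventually.of_forall fun u => by positivity),
    integral_const_mul, integral_univ_inv_one_add_sq]

theorem lintegral_lintegral_sq_sub_div_sq_le {g : ℝ → ℝ} {S : Set ℝ} (hS : MeasurableSet S)
    {L B : ℝ} (hL : ∀ s t, |g s - g t| ≤ L * |s - t|) (hB : ∀ s t, |g s - g t| ≤ B)
    (hout : ∀ s ∉ S, ∀ t ∉ S, g s = g t) :
    ∫⁻ s, ∫⁻ t, ENNReal.ofReal ((g s - g t) ^ 2 / (s - t) ^ 2) ≤
      2 * volume S * ENNReal.ofReal ((L ^ 2 + B ^ 2) * π) := by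
  set K := ENNReal.ofReal ((L ^ 2 + B ^ 2) * π)
  set κ : ℝ → ℝ≥0∞ := fun u => ENNReal.ofReal ((L ^ 2 + B ^ 2) / (1 + u ^ 2))
  set χ : ℝ → ℝ≥0∞ := S.indicator 1
  have hκ : Measurable κ := by fun_prop
  have hχ : Measurable χ := measurable_one.indicator hS
  have hκ_left (s : ℝ) : ∫⁻ t, κ (s - t) = K := by
    rw [lintegral_sub_left_eq_self κ s, lintegral_ofReal_div_one_add_sq (by positivity)]
  have hκ_right (t : ℝ) : ∫⁻ s, κ (s - t) = K := by
    rw [lintegral_sub_right_eq_self κ t, lintegral_ofReal_div_one_add_sq (by positivity)]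
  have hdom (s t : ℝ) :
      ENNReal.ofReal ((g s - g t) ^ 2 / (s - t) ^ 2) ≤ χ s * κ (s - t) + χ t * κ (s - t) := by
    by_cases hst : s ∈ S ∨ t ∈ S
    · have hκst := ENNReal.ofReal_le_ofReal (sq_div_sq_le_of_abs_le (hL s t) (hB s t))
      rcases hst with hs | ht
      · simpa [χ, hs] using le_add_right hκst
      · simpa [χ, ht] using le_add_left hκst
    · rw [not_or] at hst
      simp [hout s hst.1 t hst.2]
  calc ∫⁻ s, ∫⁻ t, ENNReal.ofReal ((g s - g t) ^ 2 / (s - t) ^ 2)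
      ≤ ∫⁻ s, ∫⁻ t, (χ s * κ (s - t) + χ t * κ (s - t)) :=
        lintegral_mono fun s => lintegral_mono fun t => hdom s t
    _ = ∫⁻ s, (χ s * K + ∫⁻ t, χ t * κ (s - t)) := lintegral_congr fun s => by
        rw [lintegral_add_left (by fun_prop), lintegral_const_mul _ (by fun_prop), hκ_left]
    _ = (∫⁻ s, χ s * K) + ∫⁻ t, ∫⁻ s, χ t * κ (s - t) := by
        rw [lintegral_add_left (hχ.mul_const K), lintegral_lintegral_swap (by fun_prop)]
    _ = 2 * volume S * K := by
        have hinner (t : ℝ) : ∫⁻ s, χ t * κ (s - t) = χ t * K := by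
          rw [lintegral_const_mul _ (by fun_prop), hκ_right]
        simp only [hinner]
        rw [lintegral_mul_const _ hχ, lintegral_indicator_one hS]
        ring

lemma two_mul_Wpot {h : ℝ} (hh : h ≤ 1) (θ : ℝ) : 2 * Wpot h θ = (cos θ - h) ^ 2 := by
  rw [Wpot, kparam, min_eq_left hh]
  ring

lemma cos_alphaParam {h : ℝ} (h0 : -1 ≤ h) (h1 : h ≤ 1) : cos (alphaParam h) = h := by
  rw [alphaParam, kparam, min_eq_left h1, cos_arccos h0 h1]

lemma abs_cos_sub_le_two (θ : ℝ) {c : ℝ} (hc : c ∈ Icc (-1) 1) : |cos θ - c| ≤ 2 :=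
  abs_le.2 ⟨by linarith [neg_one_le_cos θ, hc.2], by linarith [cos_le_one θ, hc.1]⟩

theorem energy_le_of_abs_deriv_le {h L : ℝ} {φ : ℝ → ℝ} (hφ : Differentiable ℝ φ)
    (hφ' : ∀ x, |deriv φ x| ≤ L) (hderiv : ∀ x ∉ Icc (0 : ℝ) 1, deriv φ x = 0)
    (hcos : ∀ x ∉ Icc (0 : ℝ) 1, cos (φ x) = h) :
    energy h φ ≤ ENNReal.ofReal (L ^ 2 + 4) := by
  have hh : h ∈ Icc (-1) 1 := hcos 2 (by norm_num) ▸ ⟨neg_one_le_cos _, cos_le_one _⟩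
  have hlocal : ∫⁻ x, ENNReal.ofReal (deriv φ x ^ 2 + 2 * Wpot h (φ x)) ≤
      ENNReal.ofReal (L ^ 2 + 4) * volume (Icc (0 : ℝ) 1) := by
    refine lintegral_ofReal_le_mul_measure measurableSet_Icc (fun x _ => ?_) fun x hx => ?_
    · have hd := abs_le.1 (hφ' x)
      have hw := abs_le.1 (abs_cos_sub_le_two (φ x) hh)
      rw [two_mul_Wpot hh.2]
      nlinarith [sq_le_sq' hd.1 hd.2, sq_le_sq' hw.1 hw.2]
    · simp [hderiv x hx, two_mul_Wpot hh.2, hcos x hx]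
  have hlip (s t : ℝ) : |cos (φ s) - cos (φ t)| ≤ L * |s - t| := by
    refine (abs_cos_sub_cos_le _ _).trans ?_
    simpa [Real.norm_eq_abs] using convex_univ.norm_image_sub_le_of_norm_deriv_le
      (fun x _ => hφ x) (fun x _ => hφ' x) (mem_univ t) (mem_univ s)
  have hstray := lintegral_lintegral_sq_sub_div_sq_le measurableSet_Icc hlip
    (fun s t => abs_cos_sub_le_two (φ s) ⟨neg_one_le_cos _, cos_le_one _⟩)
    fun s hs t ht => by rw [hcos s hs, hcos t ht]
  rw [Real.volume_Icc, sub_zero, ENNReal.ofReal_one, mul_one] at hlocal hstray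
  calc energy h φ
      ≤ ENNReal.ofReal (1 / 2) * ENNReal.ofReal (L ^ 2 + 4) +
          ENNReal.ofReal (1 / (4 * π)) * (2 * ENNReal.ofReal ((L ^ 2 + 2 ^ 2) * π)) := by
        rw [energy]
        gcongr
    _ = ENNReal.ofReal (L ^ 2 + 4) := by
        rw [← ENNReal.ofReal_ofNat 2, ← ENNReal.ofReal_mul (by norm_num),
          ← ENNReal.ofReal_mul (by positivity), ← ENNReal.ofReal_mul (by positivity),
          ← ENNReal.ofReal_add (by positivity) (by positivity)]
        congr 1
        field_simp
        ring

lemma energy_transitionPhase_le {h a b K M : ℝ} (hM : ∀ x, |deriv smoothTransition x| ≤ M)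
    (hab : |b - a| ≤ K) (ha : cos a = h) (hb : cos b = h) :
    energy h (transitionPhase a b) ≤ ENNReal.ofReal ((K * M) ^ 2 + 4) := by
  refine energy_le_of_abs_deriv_le
    ((contDiff_transitionPhase a b (n := 1)).differentiable one_ne_zero) (fun x => ?_)
    (fun x hx => ?_) fun x hx => ?_
  · rw [deriv_transitionPhase, abs_mul]
    exact mul_le_mul hab (hM x) (abs_nonneg _) ((abs_nonneg _).trans hab)
  · rw [deriv_transitionPhase, smoothTransition.deriv_eq_zero_of_notMem_Icc hx, mul_zero]
  · rcases le_total x 0 with hx0 | hx0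
    · rwa [transitionPhase_of_nonpos a b hx0]
    · rwa [transitionPhase_of_one_le a b (le_of_lt (not_le.1 fun hx1 => hx ⟨hx0, hx1⟩))]

/-- There is a universal `C > 0` with `ℰ_h(1 − α/π) ≤ C` for all
`h ∈ [0,1)`. -/
theorem uniform_bound_one_minus_alpha :
    ∃ C : ℝ, 0 < C ∧ ∀ h : ℝ, 0 ≤ h → h < 1 →
      Einf h (1 - alphaParam h / Real.pi) ≤ ENNReal.ofReal C := by
  obtain ⟨M, hM⟩ := smoothTransition.exists_abs_deriv_le
  refine ⟨(2 * π * M) ^ 2 + 4, by positivity, fun h h0 h1 => ?_⟩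
  set α := alphaParam h
  have hα : α ∈ Icc 0 π := ⟨arccos_nonneg _, arccos_le_pi _⟩
  have hcos : cos α = h := cos_alphaParam (by linarith) h1.le
  have henergy :
      energy h (transitionPhase α (2 * π - α)) ≤ ENNReal.ofReal ((2 * π * M) ^ 2 + 4) :=
    energy_transitionPhase_le hM (abs_le.2 ⟨by linarith [hα.2, pi_pos], by linarith [hα.1]⟩)
      hcos (by rw [cos_two_pi_sub, hcos])
  have hmem : transitionPhase α (2 * π - α) ∈ AA h (1 - α / π) := by
    refine ⟨⟨contDiff_transitionPhase _ _,
      ⟨_, ⟨1, Or.inr (by push_cast; ring)⟩, tendsto_transitionPhase_atTop _ _⟩,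
      ⟨_, ⟨0, Or.inl (by push_cast; ring)⟩, tendsto_transitionPhase_atBot _ _⟩,
      henergy.trans_lt ENNReal.ofReal_lt_top⟩, ?_⟩
    rw [deg_transitionPhase]
    field_simp
    ring
  exact (iInf₂_le _ hmem).trans henergy
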